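/- arXiv:1401.6633 — 3 statements merged into one kernel-verified Lean document; each statement's English description precedes it below -/
import Mathlib

section
/- Let M be a finite set of players with n = |M| ≥ 1 and let v : Finset M → ℝ be a coalitional game with v(∅) = 0. Define the Shapley value of player m by φ_m(v) = ∑_{S ⊆ M \ {m}} (|S|!(n − |S| − 1)!/n!) · (v(S ∪ {m}) − v(S)). Then the Shapley value is efficient: ∑_{m ∈ M} φ_m(v) = v(M). -/
/-- The Shapley value of player `m` in the coalitional game `v` on the finite
player set `M`: the weighted average of `m`'s marginal contributions
`v (S ∪ {m}) - v S` over coalitions `S ⊆ M \ {m}`, with weights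
`|S|! (|M| - |S| - 1)! / |M|!`. -/
noncomputable def shapleyValue {M : Type*} [Fintype M] [DecidableEq M]
    (v : Finset M → ℝ) (m : M) : ℝ :=
  ∑ S ∈ ((Finset.univ : Finset M).erase m).powerset,
    ((S.card.factorial : ℝ) *
        ((Fintype.card M - S.card - 1).factorial : ℝ) /
      ((Fintype.card M).factorial : ℝ)) * (v (insert m S) - v S)

/-!
Expanding the marginal contributions writes `∑ m, shapleyValue v m` as `∑ T, c T * v T`.
A coalition `T` with `|T| = k` gains the weight `(k-1)! (n-k)! / n!` from each of its `k`
members and loses the weight `k! (n-k-1)! / n!` for each of its `n - k` non-members. Both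
totals equal `1 / choose n k` whenever they occur, so `c T = 0` except for `c M = 1` (no
non-members) and `c ∅ = -1` (no members).
-/

open Finset Nat

section Reindexing

variable {α β : Type*} [DecidableEq α] [AddCommMonoid β]

theorem Finset.sum_sum_powerset_erase (s : Finset α) (f : α → Finset α → β) :
    ∑ m ∈ s, ∑ S ∈ (s.erase m).powerset, f m S = ∑ T ∈ s.powerset, ∑ m ∈ s \ T, f m T :=
  sum_comm' fun m T => by
    simp only [mem_powerset, mem_sdiff, subset_erase]
    tauto

theorem Finset.sum_sum_powerset_erase_insert (s : Finset α) (f : α → Finset α → β) :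
    ∑ m ∈ s, ∑ S ∈ (s.erase m).powerset, f m (insert m S) =
      ∑ T ∈ s.powerset, ∑ m ∈ T, f m T := by
  rw [sum_sigma', sum_sigma']
  refine sum_nbij' (fun p => ⟨insert p.1 p.2, p.1⟩) (fun p => ⟨p.2, p.1.erase p.2⟩)
    ?_ ?_ ?_ ?_ fun _ _ => rfl
  all_goals simp only [mem_sigma, mem_powerset, subset_erase]
  · rintro ⟨m, S⟩ ⟨hm, hS, -⟩
    exact ⟨insert_subset hm hS, mem_insert_self m S⟩
  · rintro ⟨T, m⟩ ⟨hT, hm⟩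
    exact ⟨hT hm, (erase_subset m T).trans hT, notMem_erase m T⟩
  · rintro ⟨m, S⟩ ⟨-, -, hmS⟩
    rw [erase_insert hmS]
  · rintro ⟨T, m⟩ ⟨-, hm⟩
    rw [insert_erase hm]

theorem Finset.sum_powerset_ite_card_mul {R : Type*} [Ring R] (s : Finset α)
    (f : Finset α → R) :
    ∑ T ∈ s.powerset, ((if #T = #s then 1 else 0) - (if #T = 0 then 1 else 0)) * f T =
      f s - f ∅ := by
  have hsummand : ∀ T ∈ s.powerset,
      ((if #T = #s then 1 else 0) - (if #T = 0 then 1 else 0)) * f T =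
        (if T = s then f T else 0) - (if T = ∅ then f T else 0) := fun T hT => by
    have hcard : #T = #s ↔ T = s :=
      ⟨fun h => eq_of_subset_of_card_le (mem_powerset.mp hT) h.ge, fun h => h ▸ rfl⟩
    simp only [hcard, card_eq_zero]
    split_ifs <;> simp
  rw [sum_congr rfl hsummand, sum_sub_distrib, sum_ite_eq', sum_ite_eq',
    if_pos (mem_powerset_self s), if_pos (empty_mem_powerset s)]

end Reindexing

noncomputable def shapleyWeight (n k : ℕ) : ℝ := k ! * (n - k - 1)! / n !

theorem natCast_mul_shapleyWeight_pred {n k : ℕ} (hk : 0 < k) (hkn : k ≤ n) :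
    k * shapleyWeight n (k - 1) = ((n.choose k : ℝ))⁻¹ := by
  rw [cast_choose ℝ hkn, inv_div, shapleyWeight, ← mul_factorial_pred hk.ne',
    show n - (k - 1) - 1 = n - k by omega]
  push_cast [Nat.cast_sub (one_le_iff_ne_zero.mpr hk.ne')]
  ring

theorem natCast_sub_mul_shapleyWeight {n k : ℕ} (hkn : k < n) :
    ((n - k : ℕ) : ℝ) * shapleyWeight n k = ((n.choose k : ℝ))⁻¹ := by
  rw [cast_choose ℝ hkn.le, inv_div, shapleyWeight,
    ← mul_factorial_pred (Nat.sub_ne_zero_of_lt hkn)]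
  push_cast
  ring

theorem natCast_mul_shapleyWeight_pred_sub {n k : ℕ} (hkn : k ≤ n) :
    k * shapleyWeight n (k - 1) - ((n - k : ℕ) : ℝ) * shapleyWeight n k =
      (if k = n then 1 else 0) - (if k = 0 then 1 else 0) := by
  rcases k.eq_zero_or_pos with rfl | hk
  · rcases n.eq_zero_or_pos with rfl | hn
    · simp
    · rw [Nat.cast_zero, zero_mul, zero_sub, natCast_sub_mul_shapleyWeight hn]
      simp [hn.ne]
  rcases hkn.eq_or_lt with rfl | hkn
  · simp [natCast_mul_shapleyWeight_pred hk le_rfl, hk.ne']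
  · rw [natCast_mul_shapleyWeight_pred hk hkn.le, natCast_sub_mul_shapleyWeight hkn]
    simp [hk.ne', hkn.ne]

section Shapley

variable {M : Type*} [Fintype M] [DecidableEq M]

theorem shapleyValue_eq (v : Finset M → ℝ) (m : M) :
    shapleyValue v m = ∑ S ∈ (univ.erase m).powerset,
      shapleyWeight (Fintype.card M) #S * (v (insert m S) - v S) :=
  rfl

theorem sum_shapleyValue (v : Finset M → ℝ) :
    ∑ m, shapleyValue v m = v univ - v ∅ := by
  set w := shapleyWeight (Fintype.card M)
  have hweight : ∀ m, ∀ S ∈ (univ.erase m).powerset,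
      w #S * v (insert m S) = w (#(insert m S) - 1) * v (insert m S) := fun m S hS => by
    rw [card_insert_of_notMem fun h => notMem_erase m univ (mem_powerset.mp hS h),
      Nat.add_sub_cancel]
  calc ∑ m, shapleyValue v m
      = ∑ m, ∑ S ∈ (univ.erase m).powerset, w (#(insert m S) - 1) * v (insert m S) -
          ∑ m, ∑ S ∈ (univ.erase m).powerset, w #S * v S := by
        simp only [shapleyValue_eq, mul_sub, sum_sub_distrib]
        rw [sum_congr rfl fun m _ => sum_congr rfl (hweight m)]
    _ = ∑ T ∈ univ.powerset, ∑ m ∈ T, w (#T - 1) * v T -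
          ∑ T ∈ univ.powerset, ∑ m ∈ univ \ T, w #T * v T :=
        congrArg₂ _ (sum_sum_powerset_erase_insert univ fun _ T => w (#T - 1) * v T)
          (sum_sum_powerset_erase univ fun _ T => w #T * v T)
    _ = ∑ T ∈ univ.powerset,
          (#T * w (#T - 1) - ((Fintype.card M - #T : ℕ) : ℝ) * w #T) * v T := by
        rw [← sum_sub_distrib]
        refine sum_congr rfl fun T _ => ?_
        rw [sum_const, sum_const, card_sdiff_of_subset (subset_univ T), Finset.card_univ,
          nsmul_eq_mul, nsmul_eq_mul]
        ring
    _ = ∑ T ∈ univ.powerset,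
          ((if #T = Fintype.card M then 1 else 0) - (if #T = 0 then 1 else 0)) * v T :=
        sum_congr rfl fun T _ => by rw [natCast_mul_shapleyWeight_pred_sub (card_le_univ T)]
    _ = v univ - v ∅ := by
        rw [← Finset.card_univ]
        exact sum_powerset_ite_card_mul univ v

end Shapley

theorem shapley_efficient_general {M : Type*} [Fintype M] [DecidableEq M]
    (v : Finset M → ℝ) (hv0 : v ∅ = 0) :
    ∑ m : M, shapleyValue v m = v Finset.univ := by
  rw [sum_shapleyValue, hv0, sub_zero]

/-- Efficiency of the Shapley value: the allocated payoffs of all players sum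
to the value of the grand coalition. -/
theorem shapley_efficient {M : Type*} [Fintype M] [DecidableEq M]
    (v : Finset M → ℝ) (hv0 : v ∅ = 0) (hn : 1 ≤ Fintype.card M) :
    ∑ m : M, shapleyValue v m = v Finset.univ :=
  shapley_efficient_general v hv0
end

section
/- Let A be a real r × p matrix, c ∈ ℝ^p, M a finite set of players with resource vectors b_i ∈ ℝ^r satisfying b_i ≥ 0 componentwise, and b(S) = ∑_{i ∈ S} b_i. Define the linear production game v(S) = sSup { c · x : x ∈ ℝ^p, x ≥ 0, A x ≤ b(S) } for S ⊆ M, and suppose that for each S the set of objective values is bounded above. Suppose y ∈ ℝ^r satisfies y ≥ 0, Aᵀ y ≥ c, and there exists a grand-coalition-feasible x* (x* ≥ 0, A x* ≤ b(M)) with c · x* = y · b(M) (i.e. y is an optimal dual solution). Then the dual payoff allocation μ_i = y · b_i, i ∈ M, lies in the core of (M, v): it is efficient, ∑_{i ∈ M} μ_i = v(M), and coalitionally rational, ∑_{i ∈ S} μ_i ≥ v(S) for every coalition S ⊆ M. -/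
/-!
Weak duality bounds the value of every production plan of a coalition `S` by the dual value
`y ⬝ᵥ b(S) = ∑ i ∈ S, y ⬝ᵥ b i` of its pooled resources, so each coalition gets at least `v(S)`.
For the grand coalition the bound is attained by `xstar`, which gives efficiency.
-/

open Matrix

/-- The set of achievable objective values for a coalition `S` in the linear
production game with technology matrix `A`, objective `c`, and individual
resource vectors `b i`. -/
def LPGameObjSet {M : Type*} [DecidableEq M] (r p : ℕ)
    (A : Matrix (Fin r) (Fin p) ℝ) (c : Fin p → ℝ) (b : M → Fin r → ℝ)
    (S : Finset M) : Set ℝ :=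
  {z : ℝ | ∃ x : Fin p → ℝ, (∀ k, 0 ≤ x k) ∧
    (∀ j, A.mulVec x j ≤ ∑ i ∈ S, b i j) ∧ z = c ⬝ᵥ x}

theorem Matrix.dotProduct_le_of_dual_feasible {m n R : Type*} [Fintype m] [Fintype n]
    [Semiring R] [PartialOrder R] [IsOrderedRing R]
    {A : Matrix m n R} {c x : n → R} {d y : m → R}
    (hx : 0 ≤ x) (hAx : A *ᵥ x ≤ d) (hy : 0 ≤ y) (hAy : c ≤ y ᵥ* A) :
    c ⬝ᵥ x ≤ y ⬝ᵥ d :=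
  calc c ⬝ᵥ x ≤ (y ᵥ* A) ⬝ᵥ x := dotProduct_le_dotProduct_of_nonneg_right hAy hx
    _ = y ⬝ᵥ (A *ᵥ x) := (dotProduct_mulVec y A x).symm
    _ ≤ y ⬝ᵥ d := dotProduct_le_dotProduct_of_nonneg_left hAx hy

namespace LPGameObjSet

variable {M : Type*} [DecidableEq M] {r p : ℕ}
  {A : Matrix (Fin r) (Fin p) ℝ} {c : Fin p → ℝ} {b : M → Fin r → ℝ}

theorem dotProduct_mem {S : Finset M} {x : Fin p → ℝ} (hx : 0 ≤ x)
    (hAx : A *ᵥ x ≤ ∑ i ∈ S, b i) : c ⬝ᵥ x ∈ LPGameObjSet r p A c b S :=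
  ⟨x, hx, fun j => by simpa only [Finset.sum_apply] using hAx j, rfl⟩

theorem zero_mem (hb : ∀ i, 0 ≤ b i) (S : Finset M) : 0 ∈ LPGameObjSet r p A c b S := by
  simpa using dotProduct_mem (c := c) le_rfl (by simpa using Finset.sum_nonneg fun i _ => hb i)

theorem le_sum_dotProduct {y : Fin r → ℝ} (hy : 0 ≤ y) (hAy : c ≤ Aᵀ *ᵥ y) {S : Finset M} :
    ∀ z ∈ LPGameObjSet r p A c b S, z ≤ ∑ i ∈ S, y ⬝ᵥ b i := by
  rintro _ ⟨x, hx, hAx, rfl⟩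
  rw [← dotProduct_sum]
  refine dotProduct_le_of_dual_feasible (A := A) (Pi.le_def.2 hx) (fun j => ?_) hy
    (by rwa [← mulVec_transpose])
  simpa only [Finset.sum_apply] using hAx j

theorem sSup_le_sum_dotProduct (hb : ∀ i, 0 ≤ b i) {y : Fin r → ℝ} (hy : 0 ≤ y)
    (hAy : c ≤ Aᵀ *ᵥ y) (S : Finset M) :
    sSup (LPGameObjSet r p A c b S) ≤ ∑ i ∈ S, y ⬝ᵥ b i :=
  csSup_le ⟨0, zero_mem hb S⟩ (le_sum_dotProduct hy hAy)

end LPGameObjSet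

theorem dual_payoff_in_core_general {M : Type*} [Fintype M] [DecidableEq M]
    (r p : ℕ)
    (A : Matrix (Fin r) (Fin p) ℝ) (c : Fin p → ℝ) (b : M → Fin r → ℝ)
    (hb_nonneg : ∀ i j, 0 ≤ b i j)
    (y : Fin r → ℝ)
    (hy_nonneg : ∀ j, 0 ≤ y j)
    (hy_dual : ∀ k, c k ≤ A.transpose.mulVec y k)
    (xstar : Fin p → ℝ)
    (hx_nonneg : ∀ k, 0 ≤ xstar k)
    (hx_feas : ∀ j, A.mulVec xstar j ≤ ∑ i : M, b i j)
    (hopt : c ⬝ᵥ xstar = y ⬝ᵥ (fun j => ∑ i : M, b i j)) :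
    (∑ i : M, y ⬝ᵥ b i) = sSup (LPGameObjSet r p A c b Finset.univ) ∧
      ∀ S : Finset M, (∑ i ∈ S, y ⬝ᵥ b i) ≥ sSup (LPGameObjSet r p A c b S) := by
  have hy : 0 ≤ y := hy_nonneg
  have hAy : c ≤ Aᵀ *ᵥ y := hy_dual
  have hxstar_mem : ∑ i, y ⬝ᵥ b i ∈ LPGameObjSet r p A c b Finset.univ := by
    rw [← dotProduct_sum, Finset.sum_fn, ← hopt]
    exact ⟨xstar, hx_nonneg, hx_feas, rfl⟩
  refine ⟨(IsGreatest.csSup_eq ⟨hxstar_mem, LPGameObjSet.le_sum_dotProduct hy hAy⟩).symm,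
    LPGameObjSet.sSup_le_sum_dotProduct hb_nonneg hy hAy⟩

/-- Dual payoff allocation lies in the core: given nonnegative resource
vectors and an optimal dual solution `y` for the grand coalition's linear
program, the allocation `μ i = y · b i` is efficient and coalitionally
rational for the linear production game `v S = sSup (LPGameObjSet S)`. -/
theorem dual_payoff_in_core {M : Type*} [Fintype M] [DecidableEq M]
    (r p : ℕ)
    (A : Matrix (Fin r) (Fin p) ℝ) (c : Fin p → ℝ) (b : M → Fin r → ℝ)
    (hb_nonneg : ∀ i j, 0 ≤ b i j)
    (hbdd : ∀ S : Finset M, BddAbove (LPGameObjSet r p A c b S))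
    (y : Fin r → ℝ)
    (hy_nonneg : ∀ j, 0 ≤ y j)
    (hy_dual : ∀ k, c k ≤ A.transpose.mulVec y k)
    (xstar : Fin p → ℝ)
    (hx_nonneg : ∀ k, 0 ≤ xstar k)
    (hx_feas : ∀ j, A.mulVec xstar j ≤ ∑ i : M, b i j)
    (hopt : c ⬝ᵥ xstar = y ⬝ᵥ (fun j => ∑ i : M, b i j)) :
    (∑ i : M, y ⬝ᵥ b i) = sSup (LPGameObjSet r p A c b Finset.univ) ∧
      ∀ S : Finset M, (∑ i ∈ S, y ⬝ᵥ b i) ≥ sSup (LPGameObjSet r p A c b S) :=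
  dual_payoff_in_core_general r p A c b hb_nonneg y hy_nonneg hy_dual xstar hx_nonneg hx_feas hopt
end

section
/- Let A be a real r × p matrix, c ∈ ℝ^p, M a finite set of players with resource vectors b_i ∈ ℝ^r satisfying b_i ≥ 0 componentwise, and b(S) = ∑_{i ∈ S} b_i. Define the linear production game v(S) = sSup { c · x : x ∈ ℝ^p, x ≥ 0, A x ≤ b(S) } for S ⊆ M, and suppose that for each S the set of objective values is bounded above. If there exists y ∈ ℝ^r with y ≥ 0, Aᵀ y ≥ c, and a grand-coalition-feasible x* (x* ≥ 0, A x* ≤ b(M)) with c · x* = y · b(M), then the core of the game (M, v) is nonempty: there exists a payoff vector x ∈ ℝ^M with ∑_{i ∈ M} x_i = v(M) and ∑_{i ∈ S} x_i ≥ v(S) for every coalition S ⊆ M. -/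
/-!
By weak duality, a dual-feasible `y` bounds every objective value coalition `S` can reach by the
price `∑ i ∈ S, y ⬝ᵥ b i` of its pooled resources. So the payoffs `y ⬝ᵥ b i` give every coalition
at least its value, and since `x*` closes the duality gap for the grand coalition, their total is
exactly `v(M)`.
-/

open Matrix

theorem Matrix.dotProduct_le_dotProduct_of_dual_feasible {m n R : Type*} [Fintype m] [Fintype n]
    [CommSemiring R] [PartialOrder R] [IsOrderedRing R] {A : Matrix m n R} {c x : n → R}
    {y β : m → R} (hx : 0 ≤ x) (hAx : A *ᵥ x ≤ β) (hy : 0 ≤ y) (hAy : c ≤ Aᵀ *ᵥ y) :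
    c ⬝ᵥ x ≤ y ⬝ᵥ β :=
  calc c ⬝ᵥ x ≤ (Aᵀ *ᵥ y) ⬝ᵥ x := dotProduct_le_dotProduct_of_nonneg_right hAy hx
    _ = y ⬝ᵥ (A *ᵥ x) := by rw [mulVec_transpose, dotProduct_mulVec]
    _ ≤ y ⬝ᵥ β := dotProduct_le_dotProduct_of_nonneg_left hAx hy

section LPGame

variable {M : Type*} [DecidableEq M] {r p : ℕ} {A : Matrix (Fin r) (Fin p) ℝ} {c : Fin p → ℝ}
  {b : M → Fin r → ℝ}

theorem zero_mem_LPGameObjSet (hb : ∀ i, 0 ≤ b i) (S : Finset M) :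
    0 ∈ LPGameObjSet r p A c b S :=
  ⟨0, fun _ => le_rfl, fun j => by simpa using Finset.sum_nonneg fun i _ => hb i j,
    (dotProduct_zero c).symm⟩

theorem le_sum_dotProduct_of_mem_LPGameObjSet {y : Fin r → ℝ} (hy : 0 ≤ y) (hAy : c ≤ Aᵀ *ᵥ y)
    {S : Finset M} {z : ℝ} (hz : z ∈ LPGameObjSet r p A c b S) : z ≤ ∑ i ∈ S, y ⬝ᵥ b i := by
  obtain ⟨x, hx, hAx, rfl⟩ := hz
  rw [← dotProduct_sum]
  refine dotProduct_le_dotProduct_of_dual_feasible hx (fun j => ?_) hy hAy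
  simpa only [Finset.sum_apply] using hAx j

theorem sSup_LPGameObjSet_le_sum_dotProduct (hb : ∀ i, 0 ≤ b i) {y : Fin r → ℝ} (hy : 0 ≤ y)
    (hAy : c ≤ Aᵀ *ᵥ y) (S : Finset M) :
    sSup (LPGameObjSet r p A c b S) ≤ ∑ i ∈ S, y ⬝ᵥ b i :=
  csSup_le ⟨0, zero_mem_LPGameObjSet hb S⟩ fun _ =>
    le_sum_dotProduct_of_mem_LPGameObjSet hy hAy

theorem bddAbove_LPGameObjSet {y : Fin r → ℝ} (hy : 0 ≤ y) (hAy : c ≤ Aᵀ *ᵥ y) (S : Finset M) :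
    BddAbove (LPGameObjSet r p A c b S) :=
  ⟨_, fun _ => le_sum_dotProduct_of_mem_LPGameObjSet hy hAy⟩

end LPGame

theorem lp_game_core_nonempty_general {M : Type*} [Fintype M] [DecidableEq M]
    (r p : ℕ)
    (A : Matrix (Fin r) (Fin p) ℝ) (c : Fin p → ℝ) (b : M → Fin r → ℝ)
    (hb_nonneg : ∀ i j, 0 ≤ b i j)
    (y : Fin r → ℝ)
    (hy_nonneg : ∀ j, 0 ≤ y j)
    (hy_dual : ∀ k, c k ≤ A.transpose.mulVec y k)
    (xstar : Fin p → ℝ)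
    (hx_nonneg : ∀ k, 0 ≤ xstar k)
    (hx_feas : ∀ j, A.mulVec xstar j ≤ ∑ i : M, b i j)
    (hopt : c ⬝ᵥ xstar = y ⬝ᵥ (fun j => ∑ i : M, b i j)) :
    ∃ x : M → ℝ,
      (∑ i : M, x i) = sSup (LPGameObjSet r p A c b Finset.univ) ∧
        ∀ S : Finset M, (∑ i ∈ S, x i) ≥ sSup (LPGameObjSet r p A c b S) := by
  have hb : ∀ i, 0 ≤ b i := hb_nonneg
  have hx_grand : c ⬝ᵥ xstar = ∑ i, y ⬝ᵥ b i := by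
    rw [hopt, ← dotProduct_sum, Finset.sum_fn]
  have hx_mem : c ⬝ᵥ xstar ∈ LPGameObjSet r p A c b Finset.univ :=
    ⟨xstar, hx_nonneg, hx_feas, rfl⟩
  refine ⟨fun i => y ⬝ᵥ b i, le_antisymm ?_ ?_,
    sSup_LPGameObjSet_le_sum_dotProduct hb hy_nonneg hy_dual⟩
  · exact hx_grand ▸ le_csSup (bddAbove_LPGameObjSet hy_nonneg hy_dual _) hx_mem
  · exact sSup_LPGameObjSet_le_sum_dotProduct hb hy_nonneg hy_dual _

/-- Nonemptiness of the core of the linear production game: given nonnegative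
resource vectors and an optimal dual solution `y` for the grand coalition's
linear program, there is a payoff vector that is efficient and coalitionally
rational, i.e. the core is nonempty. -/
theorem lp_game_core_nonempty {M : Type*} [Fintype M] [DecidableEq M]
    (r p : ℕ)
    (A : Matrix (Fin r) (Fin p) ℝ) (c : Fin p → ℝ) (b : M → Fin r → ℝ)
    (hb_nonneg : ∀ i j, 0 ≤ b i j)
    (hbdd : ∀ S : Finset M, BddAbove (LPGameObjSet r p A c b S))
    (y : Fin r → ℝ)
    (hy_nonneg : ∀ j, 0 ≤ y j)
    (hy_dual : ∀ k, c k ≤ A.transpose.mulVec y k)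
    (xstar : Fin p → ℝ)
    (hx_nonneg : ∀ k, 0 ≤ xstar k)
    (hx_feas : ∀ j, A.mulVec xstar j ≤ ∑ i : M, b i j)
    (hopt : c ⬝ᵥ xstar = y ⬝ᵥ (fun j => ∑ i : M, b i j)) :
    ∃ x : M → ℝ,
      (∑ i : M, x i) = sSup (LPGameObjSet r p A c b Finset.univ) ∧
        ∀ S : Finset M, (∑ i ∈ S, x i) ≥ sSup (LPGameObjSet r p A c b S) :=
  lp_game_core_nonempty_general r p A c b hb_nonneg y hy_nonneg hy_dual xstar hx_nonneg hx_feas hopt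
end
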